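/- (Nagel's identity) For every integer n ≥ 0, every real N > 0 and every real X: H_n^N(X√N) = (n!/N^{n/2}) · (1+X²)^{n/2} · C_n^N(X/√(1+X²)). -/

import Mathlib

open Finset Polynomial

/-- The relativistic Hermite polynomial `H_n^N(X)` (real parameter `N > 0`). -/
noncomputable def RH (n : ℕ) (N X : ℝ) : ℝ :=
  ((ascPochhammer ℝ n).eval (2 * N) / (2 * Real.sqrt N) ^ n) *
    ∑ k ∈ Finset.range (n / 2 + 1),
      (-1) ^ k / (ascPochhammer ℝ k).eval (N + 1 / 2) *
        ((n.factorial : ℝ) / (((n - 2 * k).factorial : ℝ) * (k.factorial : ℝ))) *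
        (2 * X / Real.sqrt N) ^ (n - 2 * k)

/-- The Gegenbauer polynomial `C_n^N(X)` (real parameter and argument). -/
noncomputable def Geg (n : ℕ) (N X : ℝ) : ℝ :=
  ∑ k ∈ Finset.range (n / 2 + 1),
    (-1) ^ k * ((ascPochhammer ℝ (n - k)).eval N /
      (((n - 2 * k).factorial : ℝ) * (k.factorial : ℝ))) * (2 * X) ^ (n - 2 * k)

/-! Both sides are polynomials in `X` with only the powers `X ^ (n - 2m)`. On the left, splitting
`(2N)_n = (2N)_{2m} (2N + 2m)_{n-2m}` and using the duplication formula
`(2N)_{2m} = 4^m (N)_m (N + 1/2)_m` cancels the denominators `(N + 1/2)_m`. On the right,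
homogenizing with `s = √(1 + X²)` turns `s^n C_n^N(X/s)` into `∑ c_k (2X)^{n-2k} (1 + X²)^k`;
expanding `(1 + X²)^k` binomially, the coefficient of `X ^ (n - 2m)` becomes a multiple of
`C_{n-2m}^{N+m}(1)`, and `C_p^M(1) = (2M)_p / p!` follows from the three-term recurrence. -/

open scoped Nat

section Pochhammer

variable {S : Type*} [CommSemiring S]

theorem ascPochhammer_eval_add (a b : ℕ) (x : S) :
    (ascPochhammer S (a + b)).eval x =
      (ascPochhammer S a).eval x * (ascPochhammer S b).eval (x + a) := by
  rw [← ascPochhammer_mul, eval_mul, eval_comp, eval_add, eval_X, eval_natCast]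

theorem ascPochhammer_eval_two_mul {K : Type*} [Field K] [CharZero K] (m : ℕ) (x : K) :
    (ascPochhammer K (2 * m)).eval (2 * x) =
      4 ^ m * (ascPochhammer K m).eval x * (ascPochhammer K m).eval (x + 1 / 2) := by
  induction m with
  | zero => simp
  | succ m ih =>
    rw [show 2 * (m + 1) = 2 * m + 1 + 1 by ring, ascPochhammer_succ_eval,
      ascPochhammer_succ_eval, ih, ascPochhammer_succ_eval, ascPochhammer_succ_eval]
    push_cast
    field_simp
    ring

end Pochhammer

section Gegenbauer

/-- The summand of `Geg`, set to zero for `2 * l > p` (where the truncated subtractions would give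
junk), so that `Geg` can be summed over any long enough range. -/
noncomputable def gegTerm (p : ℕ) (M x : ℝ) (l : ℕ) : ℝ :=
  if 2 * l ≤ p then
    (-1) ^ l * ((ascPochhammer ℝ (p - l)).eval M / (((p - 2 * l)! : ℝ) * (l ! : ℝ))) *
      (2 * x) ^ (p - 2 * l)
  else 0

theorem Geg_eq_sum_gegTerm {p K : ℕ} (hK : p / 2 < K) (M x : ℝ) :
    Geg p M x = ∑ l ∈ range K, gegTerm p M x l := by
  rw [Geg, ← sum_subset (range_subset_range.mpr hK)]
  · refine sum_congr rfl fun l hl => (if_pos ?_).symm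
    rw [mem_range] at hl
    omega
  · intro l _ hl
    rw [mem_range] at hl
    exact if_neg (by omega)

theorem Geg_zero (M x : ℝ) : Geg 0 M x = 1 := by
  simp [Geg]

theorem Geg_one (M x : ℝ) : Geg 1 M x = M * (2 * x) := by
  simp [Geg]

variable (M x : ℝ)

theorem gegTerm_zero (p : ℕ) :
    gegTerm p M x 0 = (ascPochhammer ℝ p).eval M / p ! * (2 * x) ^ p := by
  simp [gegTerm]

theorem gegTerm_succ_succ_zero (q : ℕ) :
    (q + 2 : ℝ) * gegTerm (q + 2) M x 0 = 2 * x * (M + q + 1) * gegTerm (q + 1) M x 0 := by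
  rw [gegTerm_zero, gegTerm_zero, ascPochhammer_succ_eval, Nat.factorial_succ]
  push_cast
  field_simp
  ring

theorem gegTerm_succ_succ_succ (q l : ℕ) :
    (q + 2 : ℝ) * gegTerm (q + 2) M x (l + 1) =
      2 * x * (M + q + 1) * gegTerm (q + 1) M x (l + 1) - (q + 2 * M) * gegTerm q M x l := by
  rcases lt_or_ge q (2 * l) with hq | hq
  · simp only [gegTerm, if_neg (by omega : ¬2 * (l + 1) ≤ q + 2),
      if_neg (by omega : ¬2 * (l + 1) ≤ q + 1), if_neg (by omega : ¬2 * l ≤ q)]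
    ring
  obtain ⟨c, rfl⟩ := Nat.exists_eq_add_of_le hq
  rcases c with _ | c
  · simp only [gegTerm, if_pos (by omega : 2 * (l + 1) ≤ 2 * l + 0 + 2),
      if_neg (by omega : ¬2 * (l + 1) ≤ 2 * l + 0 + 1), if_pos (by omega : 2 * l ≤ 2 * l + 0),
      show 2 * l + 0 + 2 - (l + 1) = l + 1 by omega, show 2 * l + 0 + 2 - 2 * (l + 1) = 0 by omega,
      show 2 * l + 0 - l = l by omega, show 2 * l + 0 - 2 * l = 0 by omega,
      ascPochhammer_succ_eval, Nat.factorial_succ]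
    push_cast
    field_simp
    ring
  · simp only [gegTerm, if_pos (by omega : 2 * (l + 1) ≤ 2 * l + (c + 1) + 2),
      if_pos (by omega : 2 * (l + 1) ≤ 2 * l + (c + 1) + 1),
      if_pos (by omega : 2 * l ≤ 2 * l + (c + 1)),
      show 2 * l + (c + 1) + 2 - (l + 1) = l + c + 1 + 1 by omega,
      show 2 * l + (c + 1) + 2 - 2 * (l + 1) = c + 1 by omega,
      show 2 * l + (c + 1) + 1 - (l + 1) = l + c + 1 by omega,
      show 2 * l + (c + 1) + 1 - 2 * (l + 1) = c by omega,
      show 2 * l + (c + 1) - l = l + c + 1 by omega,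
      show 2 * l + (c + 1) - 2 * l = c + 1 by omega,
      ascPochhammer_succ_eval, Nat.factorial_succ]
    push_cast
    field_simp
    ring

theorem Geg_succ_succ (q : ℕ) :
    (q + 2 : ℝ) * Geg (q + 2) M x =
      2 * x * (M + q + 1) * Geg (q + 1) M x - (q + 2 * M) * Geg q M x := by
  rw [Geg_eq_sum_gegTerm (K := q + 3) (by omega), Geg_eq_sum_gegTerm (K := q + 3) (by omega),
    Geg_eq_sum_gegTerm (K := q + 2) (by omega), sum_range_succ', sum_range_succ' _ (q + 2),
    mul_add, mul_add, mul_sum, mul_sum, mul_sum, gegTerm_succ_succ_zero, add_sub_right_comm,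
    ← sum_sub_distrib]
  simp only [gegTerm_succ_succ_succ]

theorem Geg_at_one (p : ℕ) : Geg p M 1 = (ascPochhammer ℝ p).eval (2 * M) / p ! := by
  induction p using Nat.twoStepInduction with
  | zero => simp [Geg_zero]
  | one => simp [Geg_one, mul_comm]
  | more q ih₀ ih₁ =>
    have hq : (q + 2 : ℝ) ≠ 0 := by positivity
    apply mul_left_cancel₀ hq
    rw [Geg_succ_succ, ih₀, ih₁, ascPochhammer_succ_eval, ascPochhammer_succ_eval,
      ascPochhammer_succ_eval]
    push_cast [Nat.factorial_succ]
    field_simp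
    ring

end Gegenbauer


noncomputable def nagelSum (n : ℕ) (N X : ℝ) : ℝ :=
  ∑ m ∈ range (n / 2 + 1), (-1) ^ m * ((ascPochhammer ℝ m).eval N / m !) *
    ((ascPochhammer ℝ (n - 2 * m)).eval (2 * (N + m)) / (n - 2 * m)!) * X ^ (n - 2 * m)

theorem RH_mul_sqrt (n : ℕ) {N : ℝ} (hN : 0 < N) (X : ℝ) :
    RH n N (X * √N) = n ! / √N ^ n * nagelSum n N X := by
  have hsqrt : √N ≠ 0 := (Real.sqrt_pos.mpr hN).ne'
  rw [RH, nagelSum, mul_div_assoc, mul_div_cancel_right₀ X hsqrt, mul_sum, mul_sum]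
  refine sum_congr rfl fun m hm => ?_
  obtain ⟨p, rfl⟩ := Nat.exists_eq_add_of_le (show 2 * m ≤ n by rw [mem_range] at hm; omega)
  rw [ascPochhammer_eval_add, ascPochhammer_eval_two_mul, Nat.add_sub_cancel_left, pow_add,
    pow_mul]
  have hpoch : (ascPochhammer ℝ m).eval (N + 1 / 2) ≠ 0 :=
    (ascPochhammer_pos m _ (by positivity)).ne'
  generalize (ascPochhammer ℝ m).eval (N + 1 / 2) = c at hpoch ⊢
  push_cast
  field_simp
  ring

theorem pow_mul_Geg_div (n : ℕ) (M X : ℝ) {s : ℝ} (hs : s ≠ 0) :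
    s ^ n * Geg n M (X / s) =
      ∑ k ∈ range (n / 2 + 1), (-1) ^ k *
        ((ascPochhammer ℝ (n - k)).eval M / ((n - 2 * k)! * k !)) * (2 * X) ^ (n - 2 * k) *
          (s ^ 2) ^ k := by
  rw [Geg, mul_sum]
  refine sum_congr rfl fun k hk => ?_
  obtain ⟨p, rfl⟩ := Nat.exists_eq_add_of_le (show 2 * k ≤ n by rw [mem_range] at hk; omega)
  rw [Nat.add_sub_cancel_left, pow_add, pow_mul, ← mul_div_assoc 2 X s, div_pow]
  field_simp

theorem sum_mul_one_add_sq_pow (n : ℕ) (N X : ℝ) :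
    ∑ k ∈ range (n / 2 + 1), (-1) ^ k *
        ((ascPochhammer ℝ (n - k)).eval N / ((n - 2 * k)! * k !)) * (2 * X) ^ (n - 2 * k) *
          (1 + X ^ 2) ^ k = nagelSum n N X := by
  -- `G m j` is the `j`-th binomial term of the summand `k = m + j`; its power of `X` is `n - 2m`.
  set G : ℕ → ℕ → ℝ := fun m j => (-1) ^ (m + j) *
    ((ascPochhammer ℝ (n - (m + j))).eval N / ((n - 2 * (m + j))! * (m + j)!)) *
      (2 * X) ^ (n - 2 * (m + j)) * ((X ^ 2) ^ j * (m + j).choose m)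
  calc _ = ∑ k ∈ range (n / 2 + 1), ∑ m ∈ range (k + 1), G m (k - m) := by
        refine sum_congr rfl fun k _ => ?_
        rw [add_pow, mul_sum]
        refine sum_congr rfl fun m hm => ?_
        simp only [G, Nat.add_sub_cancel' (Nat.lt_succ_iff.mp (mem_range.mp hm)), one_pow,
          one_mul]
    _ = ∑ m ∈ range (n / 2 + 1), ∑ j ∈ range (n / 2 + 1 - m), G m j :=
        sum_range_diag_flip _ _
    _ = nagelSum n N X := by
        refine sum_congr rfl fun m hm => ?_
        obtain ⟨p, rfl⟩ :=
          Nat.exists_eq_add_of_le (show 2 * m ≤ n by rw [mem_range] at hm; omega)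
        rw [Nat.add_sub_cancel_left, ← Geg_at_one (N + m) p, Geg, mul_sum, sum_mul,
          show (2 * m + p) / 2 + 1 - m = p / 2 + 1 by omega]
        refine sum_congr rfl fun j hj => ?_
        obtain ⟨r, rfl⟩ :=
          Nat.exists_eq_add_of_le (show 2 * j ≤ p by rw [mem_range] at hj; omega)
        simp only [G, show 2 * m + (2 * j + r) - (m + j) = m + (j + r) by omega,
          show 2 * m + (2 * j + r) - 2 * (m + j) = r by omega,
          show 2 * j + r - j = j + r by omega, Nat.add_sub_cancel_left,
          ascPochhammer_eval_add, Nat.cast_add_choose]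
        field_simp
        ring

theorem sqrt_pow_mul_Geg (n : ℕ) (N X : ℝ) :
    √(1 + X ^ 2) ^ n * Geg n N (X / √(1 + X ^ 2)) = nagelSum n N X := by
  have hX : 0 < 1 + X ^ 2 := by positivity
  rw [pow_mul_Geg_div n N X (Real.sqrt_pos.mpr hX).ne', Real.sq_sqrt hX.le,
    sum_mul_one_add_sq_pow]

/-- Nagel's identity:
`H_n^N(X√N) = (n!/N^(n/2)) (1+X²)^(n/2) C_n^N(X/√(1+X²))`. -/
theorem nagel_identity (n : ℕ) (N : ℝ) (hN : 0 < N) (X : ℝ) :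
    RH n N (X * Real.sqrt N) =
      (n.factorial : ℝ) / N ^ ((n : ℝ) / 2) * (1 + X ^ 2) ^ ((n : ℝ) / 2) *
        Geg n N (X / Real.sqrt (1 + X ^ 2)) := by
  rw [RH_mul_sqrt n hN, Real.rpow_div_two_eq_sqrt _ hN.le,
    Real.rpow_div_two_eq_sqrt _ (by positivity), Real.rpow_natCast, Real.rpow_natCast,
    mul_assoc, sqrt_pow_mul_Geg]
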